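/- arXiv:1809.06898 — 3 statements merged into one kernel-verified Lean document; each statement's English description precedes it below -/
import Mathlib

section
/- The Q_1-Margolis homology of B₂ is F_p[ζ_1] ⊗ T_1(ζ_2, ζ_3, …): the subspace of B₂ spanned by monomials ζ_1^{e_1} ζ_2^{e_2} ⋯ ζ_r^{e_r} in which e_k < p for every k ≥ 2 (with e_1 arbitrary) lies in ker(Q_1), meets im(Q_1) only in 0, and maps isomorphically onto ker(Q_1)/im(Q_1). -/
/-- A monomial of `B n = F_p[ζ₁, ζ₂, …] ⊗ Λ(τ̄_{n+1}, τ̄_{n+2}, …)`: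
`e k` is the exponent of `ζ_k` (with `e 0 = 0`, i.e. no `ζ₀`), and
`t` is the set of indices `m` of the exterior generators `τ̄_m` occurring
(all of which satisfy `m ≥ n + 1`). -/
structure Mono (n : ℕ) where
  e : ℕ →₀ ℕ
  t : Finset ℕ
  he : e 0 = 0
  ht : ∀ m ∈ t, n + 1 ≤ m

/-- `B p n` models `A//E(n)_* = F_p[ζ₁, ζ₂, …] ⊗ Λ(τ̄_{n+1}, …)` as the free
`F_p`-vector space on its monomial basis. -/
abbrev B (p n : ℕ) : Type := Mono n →₀ ZMod p

namespace Mono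

variable {n : ℕ}

/-- Internal (topological) degree of a monomial: `deg ζ_k = 2(p^k − 1)`,
`deg τ̄_m = 2p^m − 1`. -/
def deg (p : ℕ) (x : Mono n) : ℕ :=
  x.e.sum (fun k a => a * (2 * (p ^ k - 1))) + ∑ m ∈ x.t, (2 * p ^ m - 1)

/-- Weight of a monomial: `wt ζ_k = wt τ̄_k = p^k`, extended additively. -/
def wt (p : ℕ) (x : Mono n) : ℕ :=
  x.e.sum (fun k a => a * p ^ k) + ∑ m ∈ x.t, p ^ m

/-- Length of a monomial: the number of exterior factors `τ̄_m` occurring in it. -/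
def len (x : Mono n) : ℕ := x.t.card

end Mono

/-- The monomial obtained from `x` by the Milnor operation `Q_r` acting on the
exterior factor `τ̄_m`: remove `τ̄_m` and multiply by `ζ_{m−r}^{p^r}`
(with the convention `ζ₀ = 1`, i.e. if `m ≤ r` nothing is added). -/
noncomputable def Qtarget (p r : ℕ) {n : ℕ} (x : Mono n) (m : ℕ) : Mono n where
  e := if r < m then x.e + Finsupp.single (m - r) (p ^ r) else x.e
  t := x.t.erase m
  he := by
    by_cases h : r < m
    · simp [if_pos h, Finsupp.single_apply, x.he, Nat.sub_ne_zero_of_lt h]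
    · simp [if_neg h, x.he]
  ht := fun m' hm' => x.ht m' (Finset.mem_of_mem_erase hm')

/-- Value of the Milnor operation `Q_r` on a basis monomial: the signed sum over the
exterior factors `τ̄_m` of `x`, the sign being the Koszul sign `(−1)^{#{m' ∈ t, m' < m}}`. -/
noncomputable def Qmono (p r : ℕ) {n : ℕ} (x : Mono n) : B p n :=
  ∑ m ∈ x.t, ((-1 : ZMod p) ^ ((x.t.filter (fun m' => m' < m)).card)) •
    Finsupp.single (Qtarget p r x m) (1 : ZMod p)

/-- The Milnor operation `Q_r : B_n → B_n`, the unique graded derivation with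
`Q_r ζ_k = 0` and `Q_r τ̄_m = ζ_{m−r}^{p^r}`. -/
noncomputable def Qop (p n r : ℕ) : B p n →ₗ[ZMod p] B p n :=
  Finsupp.lsum (ZMod p) fun x => LinearMap.toSpanSingleton (ZMod p) (B p n) (Qmono p r x)

/-- The span of the set of monomials satisfying a predicate `P`. -/
noncomputable def monSpan (p n : ℕ) (P : Mono n → Prop) : Submodule (ZMod p) (B p n) :=
  Submodule.span (ZMod p) ((fun x => Finsupp.single x (1 : ZMod p)) '' {x | P x})


/-!
For `r ≤ n`, the complex `(B_n, Q_r)` is the tensor product of `F_p[ζ_1, …, ζ_{n-r}]` (zero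
differential) with the complexes `F_p[ζ_k] ⊗ Λ(τ̄_{k+r})`, `τ̄_{k+r} ↦ ζ_k^{p^r}`, for
`k + r > n`; each of the latter has homology `T_r(ζ_k)`. An explicit contracting homotopy `h`
realises this: at the first index `k` where a monomial `x` is not of the form `ζ_k^e` with
`e < p^r`, it trades `ζ_k^{p^r}` for `τ̄_{k+r}`, or kills `x` if `τ̄_{k+r}` already divides it.
With `π` the projection onto the monomials that are truncated at every such `k`, one gets
`Q_r h + h Q_r + π = 1` and `π Q_r = 0`.
-/

section Homotopy

variable {R M : Type*} [Ring R] [AddCommGroup M] [Module R M]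

theorem LinearMap.ker_le_sup_range_of_homotopy {d h π : M →ₗ[R] M} {S : Submodule R M}
    (hdh : d ∘ₗ h + h ∘ₗ d + π = LinearMap.id) (hπ : LinearMap.range π ≤ S) :
    LinearMap.ker d ≤ S ⊔ LinearMap.range d := by
  intro z hz
  have hz' : d (h z) + π z = z := by
    simpa [LinearMap.mem_ker.1 hz] using LinearMap.congr_fun hdh z
  rw [← hz', add_comm]
  exact Submodule.add_mem_sup (hπ ⟨z, rfl⟩) ⟨h z, rfl⟩

theorem LinearMap.inf_range_eq_bot_of_comp_eq_zero {d π : M →ₗ[R] M} {S : Submodule R M}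
    (hπd : π ∘ₗ d = 0) (hπS : ∀ z ∈ S, π z = z) : S ⊓ LinearMap.range d = ⊥ := by
  refine eq_bot_iff.2 fun z ⟨hzS, w, hw⟩ => ?_
  rw [Submodule.mem_bot, ← hπS z hzS, ← hw]
  exact LinearMap.congr_fun hπd w

end Homotopy

namespace Mono

variable {p n r : ℕ}

@[ext]
theorem ext {x y : Mono n} (he : x.e = y.e) (ht : x.t = y.t) : x = y := by
  cases x; cases y; simp_all

/-- The factor `F_p[ζ_k] ⊗ Λ(τ̄_{k+r})` of `x` is not of the form `ζ_k^e` with `e < p^r`. -/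
def NonTruncatedAt (p r : ℕ) (x : Mono n) (k : ℕ) : Prop :=
  n + 1 ≤ k + r ∧ (p ^ r ≤ x.e k ∨ k + r ∈ x.t)

def IsTruncated (p r : ℕ) (x : Mono n) : Prop :=
  x.t = ∅ ∧ ∀ k, n + 1 ≤ k + r → x.e k < p ^ r

/-- The monomial `x τ̄_{k+r} / ζ_k^{p^r}`. -/
noncomputable def exchange (p r : ℕ) (x : Mono n) (k : ℕ) (hk : n + 1 ≤ k + r) : Mono n where
  e := x.e - Finsupp.single k (p ^ r)
  t := insert (k + r) x.t
  he := by simp [x.he]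
  ht m hm := by
    rcases Finset.mem_insert.1 hm with rfl | hm
    · exact hk
    · exact x.ht m hm

theorem Qtarget_e (hr : r ≤ n) {x : Mono n} {m : ℕ} (hm : m ∈ x.t) :
    (Qtarget p r x m).e = x.e + Finsupp.single (m - r) (p ^ r) :=
  if_pos (by have := x.ht m hm; omega)

theorem Qtarget_t (x : Mono n) (m : ℕ) : (Qtarget p r x m).t = x.t.erase m := rfl

theorem nonTruncatedAt_sub_of_mem (hr : r ≤ n) {x : Mono n} {m : ℕ} (hm : m ∈ x.t) :
    NonTruncatedAt p r x (m - r) := by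
  have := x.ht m hm
  exact ⟨by omega, Or.inr (by rwa [Nat.sub_add_cancel (by omega)])⟩

theorem exists_nonTruncatedAt_iff (hr : r ≤ n) {x : Mono n} :
    (∃ k, NonTruncatedAt p r x k) ↔ ¬ IsTruncated p r x := by
  constructor
  · rintro ⟨k, hk, hkx⟩ ⟨ht, he⟩
    rcases hkx with hkx | hkx
    · exact (he k hk).not_ge hkx
    · simp [ht] at hkx
  · intro hx
    obtain ⟨m, hm⟩ | ht := x.t.eq_empty_or_nonempty.symm
    · exact ⟨m - r, nonTruncatedAt_sub_of_mem hr hm⟩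
    · have : ¬ ∀ k, n + 1 ≤ k + r → x.e k < p ^ r := fun he => hx ⟨ht, he⟩
      push Not at this
      obtain ⟨k, hk, hkx⟩ := this
      exact ⟨k, hk, Or.inl hkx⟩

theorem not_isTruncated_Qtarget (hr : r ≤ n) {x : Mono n} {m : ℕ} (hm : m ∈ x.t) :
    ¬ (Qtarget p r x m).IsTruncated p r := by
  have := x.ht m hm
  exact fun h => (h.2 (m - r) (by omega)).not_ge (by simp [Qtarget_e hr hm])

theorem add_le_of_mem_of_isLeast (hr : r ≤ n) {x : Mono n} {k m : ℕ}
    (hk : IsLeast {j | NonTruncatedAt p r x j} k) (hm : m ∈ x.t) : k + r ≤ m := by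
  have := hk.2 (nonTruncatedAt_sub_of_mem hr hm)
  have := x.ht m hm
  omega

theorem nonTruncatedAt_Qtarget_iff (hr : r ≤ n) {x : Mono n} {j m : ℕ} (hm : m ∈ x.t)
    (hj : j + r < m) : NonTruncatedAt p r (Qtarget p r x m) j ↔ NonTruncatedAt p r x j := by
  have he : (Qtarget p r x m).e j = x.e j := by
    simp [Qtarget_e hr hm, show m - r ≠ j by omega]
  simp only [NonTruncatedAt, he, Qtarget_t, Finset.mem_erase, ne_eq, show j + r ≠ m by omega,
    not_false_eq_true, true_and]

theorem isLeast_Qtarget (hr : r ≤ n) {x : Mono n} {k m : ℕ}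
    (hk : IsLeast {j | NonTruncatedAt p r x j} k) (hm : m ∈ x.t) :
    IsLeast {j | NonTruncatedAt p r (Qtarget p r x m) j} k := by
  have hkm := add_le_of_mem_of_isLeast hr hk hm
  refine ⟨?_, fun j hj => ?_⟩
  · rcases hkm.lt_or_eq with hkm | rfl
    · exact (nonTruncatedAt_Qtarget_iff hr hm hkm).2 hk.1
    · exact ⟨hk.1.1, Or.inl (by simp [Qtarget_e hr hm])⟩
  · by_contra! hjk
    exact hjk.not_ge (hk.2 ((nonTruncatedAt_Qtarget_iff hr hm (by omega)).1 hj))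

theorem Qtarget_exchange_self (hr : r ≤ n) {x : Mono n} {k : ℕ} (hk : n + 1 ≤ k + r)
    (hkt : k + r ∉ x.t) (hpe : p ^ r ≤ x.e k) :
    Qtarget p r (exchange p r x k hk) (k + r) = x := by
  ext1
  · rw [Qtarget_e hr (Finset.mem_insert_self _ _), Nat.add_sub_cancel]
    exact tsub_add_cancel_of_le (Finsupp.single_le_iff.2 hpe)
  · exact Finset.erase_insert hkt

theorem exchange_Qtarget_self (hr : r ≤ n) {x : Mono n} {k : ℕ} (hk : n + 1 ≤ k + r)
    (hkt : k + r ∈ x.t) : exchange p r (Qtarget p r x (k + r)) k hk = x := by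
  ext1
  · simp [exchange, Qtarget_e hr hkt]
  · exact Finset.insert_erase hkt

theorem exchange_Qtarget_comm (hr : r ≤ n) {x : Mono n} {k m : ℕ} (hk : n + 1 ≤ k + r)
    (hm : m ∈ x.t) (hne : m ≠ k + r) (hpe : p ^ r ≤ x.e k) :
    exchange p r (Qtarget p r x m) k hk = Qtarget p r (exchange p r x k hk) m := by
  ext1
  · rw [Qtarget_e hr (Finset.mem_insert_of_mem hm : m ∈ (exchange p r x k hk).t)]
    show (Qtarget p r x m).e - _ = _
    rw [Qtarget_e hr hm]
    exact (tsub_add_eq_add_tsub (Finsupp.single_le_iff.2 hpe)).symm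
  · exact (Finset.erase_insert_of_ne hne.symm).symm

end Mono

def koszulSign (p : ℕ) (t : Finset ℕ) (m : ℕ) : ZMod p := (-1) ^ (t.filter (· < m)).card

theorem koszulSign_mul_self (p : ℕ) (t : Finset ℕ) (m : ℕ) :
    koszulSign p t m * koszulSign p t m = 1 := by
  rw [koszulSign, ← pow_add, ← two_mul, pow_mul, neg_one_sq, one_pow]

theorem koszulSign_erase_of_le {p a m : ℕ} (t : Finset ℕ) (h : m ≤ a) :
    koszulSign p (t.erase a) m = koszulSign p t m := by
  rw [koszulSign, Finset.filter_erase, Finset.erase_eq_of_notMem (by simp; omega), koszulSign]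

theorem koszulSign_insert_self (p : ℕ) (t : Finset ℕ) (a : ℕ) :
    koszulSign p (insert a t) a = koszulSign p t a := by
  rw [koszulSign, Finset.filter_insert, if_neg (lt_irrefl a), koszulSign]

theorem koszulSign_insert_of_lt {p a m : ℕ} {t : Finset ℕ} (ha : a ∉ t) (h : a < m) :
    koszulSign p (insert a t) m = -koszulSign p t m := by
  rw [koszulSign, Finset.filter_insert, if_pos h,
    Finset.card_insert_of_notMem (fun h' => ha (Finset.mem_of_mem_filter a h')), pow_succ,
    mul_neg_one, koszulSign]

theorem Qmono_eq_sum (p r : ℕ) {n : ℕ} (x : Mono n) :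
    Qmono p r x = ∑ m ∈ x.t, koszulSign p x.t m • Finsupp.single (Qtarget p r x m) 1 := rfl

theorem Qop_single (p n r : ℕ) (x : Mono n) :
    Qop p n r (Finsupp.single x 1) = Qmono p r x := by
  simp [Qop]

open scoped Classical in
noncomputable def homotopyMono (p r : ℕ) {n : ℕ} (x : Mono n) : B p n :=
  if h : ∃ k, x.NonTruncatedAt p r k then
    if Nat.find h + r ∈ x.t then 0
    else koszulSign p x.t (Nat.find h + r) •
      Finsupp.single (x.exchange p r (Nat.find h) (Nat.find_spec h).1) 1
  else 0

open scoped Classical in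
noncomputable def truncMono (p r : ℕ) {n : ℕ} (x : Mono n) : B p n :=
  if x.IsTruncated p r then Finsupp.single x 1 else 0

noncomputable def homotopy (p n r : ℕ) : B p n →ₗ[ZMod p] B p n :=
  Finsupp.linearCombination (ZMod p) (homotopyMono p r)

noncomputable def truncation (p n r : ℕ) : B p n →ₗ[ZMod p] B p n :=
  Finsupp.linearCombination (ZMod p) (truncMono p r)

section

variable {p n r : ℕ}

theorem homotopyMono_of_isLeast {x : Mono n} {k : ℕ}
    (hk : IsLeast {j | x.NonTruncatedAt p r j} k) :
    homotopyMono p r x = if k + r ∈ x.t then 0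
      else koszulSign p x.t (k + r) • Finsupp.single (x.exchange p r k hk.1.1) 1 := by
  classical
  have h : ∃ j, x.NonTruncatedAt p r j := ⟨k, hk.1⟩
  obtain rfl : Nat.find h = k := le_antisymm (Nat.find_min' h hk.1) (hk.2 (Nat.find_spec h))
  rw [homotopyMono, dif_pos h]

theorem homotopy_Qmono (x : Mono n) :
    homotopy p n r (Qmono p r x) =
      ∑ m ∈ x.t, koszulSign p x.t m • homotopyMono p r (Qtarget p r x m) := by
  simp [Qmono_eq_sum, homotopy, map_sum]

theorem homotopy_Qmono_of_mem (hr : r ≤ n) {x : Mono n} {k : ℕ}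
    (hk : IsLeast {j | x.NonTruncatedAt p r j} k) (hkt : k + r ∈ x.t) :
    homotopy p n r (Qmono p r x) = Finsupp.single x 1 := by
  rw [homotopy_Qmono, Finset.sum_eq_single_of_mem (k + r) hkt]
  · have hkt' : k + r ∉ (Qtarget p r x (k + r)).t := Finset.notMem_erase _ _
    have hsign : koszulSign p (Qtarget p r x (k + r)).t (k + r) = koszulSign p x.t (k + r) :=
      koszulSign_erase_of_le _ le_rfl
    rw [homotopyMono_of_isLeast (Mono.isLeast_Qtarget hr hk hkt), if_neg hkt', hsign,
      Mono.exchange_Qtarget_self hr _ hkt, smul_smul, koszulSign_mul_self, one_smul]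
  · intro m hm hne
    have hkm : k + r ∈ (Qtarget p r x m).t := Finset.mem_erase.2 ⟨hne.symm, hkt⟩
    rw [homotopyMono_of_isLeast (Mono.isLeast_Qtarget hr hk hm), if_pos hkm, smul_zero]

theorem Qop_homotopyMono_add_homotopy_Qmono (hr : r ≤ n) {x : Mono n} {k : ℕ}
    (hk : IsLeast {j | x.NonTruncatedAt p r j} k) (hkt : k + r ∉ x.t) :
    Qop p n r (homotopyMono p r x) + homotopy p n r (Qmono p r x) = Finsupp.single x 1 := by
  have hpe : p ^ r ≤ x.e k := hk.1.2.resolve_right hkt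
  have hlt : ∀ m ∈ x.t, k + r < m := fun m hm =>
    (Mono.add_le_of_mem_of_isLeast hr hk hm).lt_of_ne fun h => hkt (h ▸ hm)
  set s := koszulSign p x.t (k + r)
  set x' := x.exchange p r k hk.1.1
  -- the terms of `Q_r x'` other than `± x` cancel against `h (Q_r x)`
  set rest : B p n :=
    ∑ m ∈ x.t, (s * koszulSign p x.t m) • Finsupp.single (Qtarget p r x' m) 1
  have hQ : Qop p n r (homotopyMono p r x) = Finsupp.single x 1 - rest := by
    rw [homotopyMono_of_isLeast hk, if_neg hkt, map_smul, Qop_single, Qmono_eq_sum,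
      show x'.t = insert (k + r) x.t from rfl, Finset.sum_insert hkt, koszulSign_insert_self,
      Mono.Qtarget_exchange_self hr _ hkt hpe, smul_add, smul_smul, koszulSign_mul_self,
      one_smul, Finset.smul_sum, sub_eq_add_neg, ← Finset.sum_neg_distrib]
    refine congrArg _ (Finset.sum_congr rfl fun m hm => ?_)
    rw [koszulSign_insert_of_lt hkt (hlt m hm), smul_smul, mul_neg, neg_smul]
  have hH : homotopy p n r (Qmono p r x) = rest := by
    rw [homotopy_Qmono]
    refine Finset.sum_congr rfl fun m hm => ?_
    have hkm : k + r ∉ (Qtarget p r x m).t := fun h => hkt (Finset.mem_of_mem_erase h)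
    have hsign : koszulSign p (Qtarget p r x m).t (k + r) = s :=
      koszulSign_erase_of_le _ (hlt m hm).le
    rw [homotopyMono_of_isLeast (Mono.isLeast_Qtarget hr hk hm), if_neg hkm, hsign,
      Mono.exchange_Qtarget_comm hr _ hm (hlt m hm).ne' hpe, smul_smul, mul_comm]
  rw [hQ, hH, sub_add_cancel]

theorem Qop_homotopyMono_add (hr : r ≤ n) (x : Mono n) :
    Qop p n r (homotopyMono p r x) + homotopy p n r (Qmono p r x) + truncMono p r x =
      Finsupp.single x 1 := by
  classical
  by_cases h : ∃ k, x.NonTruncatedAt p r k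
  · have hk : IsLeast {j | x.NonTruncatedAt p r j} (Nat.find h) :=
      ⟨Nat.find_spec h, fun j hj => Nat.find_min' h hj⟩
    rw [truncMono, if_neg ((Mono.exists_nonTruncatedAt_iff hr).1 h), add_zero]
    by_cases hkt : Nat.find h + r ∈ x.t
    · rw [homotopyMono_of_isLeast hk, if_pos hkt, map_zero, zero_add,
        homotopy_Qmono_of_mem hr hk hkt]
    · exact Qop_homotopyMono_add_homotopy_Qmono hr hk hkt
  · have hx : x.IsTruncated p r := not_not.1 (mt (Mono.exists_nonTruncatedAt_iff hr).2 h)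
    rw [homotopyMono, dif_neg h, truncMono, if_pos hx, Qmono_eq_sum, hx.1, Finset.sum_empty,
      map_zero, map_zero, zero_add, zero_add]

theorem Qop_comp_homotopy_add (hr : r ≤ n) :
    Qop p n r ∘ₗ homotopy p n r + homotopy p n r ∘ₗ Qop p n r + truncation p n r =
      LinearMap.id :=
  Finsupp.lhom_ext' fun x => LinearMap.ext_ring <| by
    simpa [homotopy, truncation, Qop_single] using Qop_homotopyMono_add hr x

theorem truncation_comp_Qop (hr : r ≤ n) : truncation p n r ∘ₗ Qop p n r = 0 :=
  Finsupp.lhom_ext' fun x => LinearMap.ext_ring <| by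
    simp only [LinearMap.comp_apply, Finsupp.lsingle_apply, Qop_single, Qmono_eq_sum, map_sum,
      map_smul, LinearMap.zero_apply]
    refine Finset.sum_eq_zero fun m hm => ?_
    simp [truncation, truncMono, Mono.not_isTruncated_Qtarget hr hm]

theorem range_truncation_le :
    LinearMap.range (truncation p n r) ≤ monSpan p n (Mono.IsTruncated p r) := by
  rw [truncation, Finsupp.range_linearCombination, Submodule.span_le]
  rintro _ ⟨x, rfl⟩
  by_cases hx : x.IsTruncated p r
  · rw [truncMono, if_pos hx]
    exact Submodule.subset_span ⟨x, hx, rfl⟩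
  · simp [truncMono, hx]

theorem truncation_apply_of_mem {z : B p n} (hz : z ∈ monSpan p n (Mono.IsTruncated p r)) :
    truncation p n r z = z :=
  LinearMap.eqOn_span (g := LinearMap.id) (by
    rintro _ ⟨x, hx, rfl⟩
    simp [truncation, truncMono, show x.IsTruncated p r from hx]) hz

theorem monSpan_isTruncated_le_ker_Qop :
    monSpan p n (Mono.IsTruncated p r) ≤ LinearMap.ker (Qop p n r) := by
  rw [monSpan, Submodule.span_le]
  rintro _ ⟨x, hx, rfl⟩
  simp [Qop_single, Qmono_eq_sum, hx.1]

theorem margolis_Qop (hr : r ≤ n) :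
    monSpan p n (Mono.IsTruncated p r) ≤ LinearMap.ker (Qop p n r) ∧
    monSpan p n (Mono.IsTruncated p r) ⊓ LinearMap.range (Qop p n r) = ⊥ ∧
    LinearMap.ker (Qop p n r) ≤
      monSpan p n (Mono.IsTruncated p r) ⊔ LinearMap.range (Qop p n r) :=
  ⟨monSpan_isTruncated_le_ker_Qop,
    LinearMap.inf_range_eq_bot_of_comp_eq_zero (truncation_comp_Qop hr)
      fun _ => truncation_apply_of_mem,
    LinearMap.ker_le_sup_range_of_homotopy (Qop_comp_homotopy_add hr) range_truncation_le⟩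

end

theorem margolis_Q1_of_B2_general (p : ℕ) :
    monSpan p 2 (fun x => x.t = ∅ ∧ ∀ k, 2 ≤ k → x.e k < p) ≤
        LinearMap.ker (Qop p 2 1) ∧
    monSpan p 2 (fun x => x.t = ∅ ∧ ∀ k, 2 ≤ k → x.e k < p) ⊓
        LinearMap.range (Qop p 2 1) = ⊥ ∧
    LinearMap.ker (Qop p 2 1) ≤
      monSpan p 2 (fun x => x.t = ∅ ∧ ∀ k, 2 ≤ k → x.e k < p) ⊔
        LinearMap.range (Qop p 2 1) := by
  have hP :
      (fun x : Mono 2 => x.t = ∅ ∧ ∀ k, 2 ≤ k → x.e k < p) = Mono.IsTruncated p 1 := by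
    funext x
    simp only [Mono.IsTruncated, pow_one, Nat.add_le_add_iff_right]
  rw [hP]
  exact margolis_Qop (by norm_num)

/-- The `Q₁`-Margolis homology of `B₂` is `F_p[ζ₁] ⊗ T₁(ζ₂, ζ₃, …)`:
the subspace spanned by the monomials `ζ₁^{e₁} ζ₂^{e₂} ⋯` with `e_k < p` for `k ≥ 2`
(and no exterior factors) lies in `ker Q₁`, meets `im Q₁` only in `0`, and maps
isomorphically onto `ker Q₁ / im Q₁`. -/
theorem margolis_Q1_of_B2 (p : ℕ) (hp : p.Prime) (hodd : Odd p) :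
    monSpan p 2 (fun x => x.t = ∅ ∧ ∀ k, 2 ≤ k → x.e k < p) ≤
        LinearMap.ker (Qop p 2 1) ∧
    monSpan p 2 (fun x => x.t = ∅ ∧ ∀ k, 2 ≤ k → x.e k < p) ⊓
        LinearMap.range (Qop p 2 1) = ⊥ ∧
    LinearMap.ker (Qop p 2 1) ≤
      monSpan p 2 (fun x => x.t = ∅ ∧ ∀ k, 2 ≤ k → x.e k < p) ⊔
        LinearMap.range (Qop p 2 1) :=
  margolis_Q1_of_B2_general p
end

section
/- For i ≥ 1, j ≥ 0, and 0 ≤ k ≤ p − 1, multiplication by ζ_1^k is an F_p-linear bijection from M_i(pj) onto M_i(pj + k) which commutes with the operations Q_0, …, Q_i and raises internal degree by qk (q = 2(p−1)); that is, Σ^{qk} M_i(pj) ≅ M_i(pj+k) as graded E(i)-modules, induced by multiplication by ζ_1^k. -/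
/-- The monomial `ζ₁^a · x` (multiplication by a power of `ζ₁`). -/
noncomputable def shiftZ1 {n : ℕ} (a : ℕ) (x : Mono n) : Mono n where
  e := x.e + Finsupp.single 1 a
  t := x.t
  he := by simp [Finsupp.single_apply, x.he]
  ht := x.ht

/-- Multiplication by `ζ₁^a` as a linear endomorphism of `B_n`. -/
noncomputable def mulZ1 (p n a : ℕ) : B p n →ₗ[ZMod p] B p n :=
  Finsupp.lsum (ZMod p) fun x =>
    LinearMap.toSpanSingleton (ZMod p) (B p n) (Finsupp.single (shiftZ1 a x) 1)

/-- The product of two basis monomials of `B_n`: zero if they share an exterior factor,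
and otherwise the merged monomial together with the Koszul sign counting the inversions
among the (odd-degree) exterior factors. -/
noncomputable def monoMulFun (p n : ℕ) (x y : Mono n) : B p n :=
  if Disjoint x.t y.t then
    ((-1 : ZMod p) ^ (∑ m ∈ x.t, (y.t.filter (fun m' => m' < m)).card)) •
      Finsupp.single
        (⟨x.e + y.e, x.t ∪ y.t, by simp [x.he, y.he],
          fun m hm => (Finset.mem_union.mp hm).elim (x.ht m) (y.ht m)⟩ : Mono n) 1
  else 0

/-- The (graded-commutative) product of `B_n`, extended bilinearly from monomials. -/
noncomputable def Bmul (p n : ℕ) (f g : B p n) : B p n :=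
  f.sum fun x c => g.sum fun y d => (c * d) • monoMulFun p n x y

/-- `M_n(j) ⊆ B_n`: the span of the monomials of weight exactly `pj`. -/
noncomputable def Msub (p n j : ℕ) : Submodule (ZMod p) (B p n) := monSpan p n (fun x => x.wt p = p * j)

theorem sum_mul_g (g : ℕ → ℕ) (f f' : ℕ →₀ ℕ) :
    (f + f').sum (fun k a => a * g k) = f.sum (fun k a => a * g k) + f'.sum (fun k a => a * g k) :=
  Finsupp.sum_add_index' (fun _ => zero_mul _) (fun _ b c => add_mul b c _)

theorem Mono.ext' {n : ℕ} {x y : Mono n} (he : x.e = y.e) (ht : x.t = y.t) : x = y := by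
  cases x; cases y; simp_all

theorem shiftZ1_injective {n : ℕ} (a : ℕ) :
    Function.Injective (shiftZ1 (n := n) a) := by
  intro x y h
  have he : x.e + Finsupp.single 1 a = y.e + Finsupp.single 1 a :=
    congrArg Mono.e h
  have ht := congrArg Mono.t h
  exact Mono.ext' (add_right_cancel he) ht

theorem mulZ1_single {p n : ℕ} (a : ℕ) (x : Mono n) (c : ZMod p) :
    mulZ1 p n a (Finsupp.single x c) = Finsupp.single (shiftZ1 a x) c := by
  simp [mulZ1, Finsupp.smul_single]

theorem mulZ1_eq_mapDomain (p n a : ℕ) (f : B p n) :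
    mulZ1 p n a f = Finsupp.mapDomain (shiftZ1 a) f := by
  simp only [mulZ1, Finsupp.lsum_apply, Finsupp.mapDomain, Finsupp.sum]
  refine Finset.sum_congr rfl fun x _ => ?_
  simp [Finsupp.smul_single]

theorem mulZ1_injective (p n a : ℕ) : Function.Injective (mulZ1 p n a) := by
  intro f g h
  rw [mulZ1_eq_mapDomain, mulZ1_eq_mapDomain] at h
  exact Finsupp.mapDomain_injective (shiftZ1_injective a) h

theorem wt_shiftZ1 {n : ℕ} (p a : ℕ) (x : Mono n) :
    (shiftZ1 a x).wt p = x.wt p + a * p := by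
  simp only [Mono.wt, shiftZ1]
  rw [sum_mul_g (fun k => p ^ k), Finsupp.sum_single_index (by simp)]
  ring

theorem qop_single {p n : ℕ} (r : ℕ) (x : Mono n) (c : ZMod p) :
    Qop p n r (Finsupp.single x c) = c • Qmono p r x := by
  simp [Qop]

theorem Qtarget_shiftZ1 {n : ℕ} (p r a : ℕ) (x : Mono n) (m : ℕ) :
    Qtarget p r (shiftZ1 a x) m = shiftZ1 a (Qtarget p r x m) := by
  refine Mono.ext' ?_ rfl
  simp only [Qtarget, shiftZ1]
  by_cases h : r < m
  · simp only [if_pos h]; abel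
  · simp only [if_neg h]

/-- Decomposition of the weight: `wt y = (y.e 1) * p + p² * c` for some `c`. -/
theorem wt_decomp {n : ℕ} (p : ℕ) (hn : 1 ≤ n) (y : Mono n) :
    ∃ c, y.wt p = y.e 1 * p + p ^ 2 * c := by
  have h1 : p ^ 2 ∣ ∑ m ∈ y.t, p ^ m := by
    refine Finset.dvd_sum fun m hm => ?_
    exact pow_dvd_pow p (by have := y.ht m hm; omega)
  have h2 : p ^ 2 ∣ (y.e.erase 1).sum (fun k a => a * p ^ k) := by
    refine Finset.dvd_sum fun k hk => ?_
    have hk1 : k ≠ 1 := by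
      have := Finsupp.support_erase (a := 1) (f := y.e) ▸ hk
      exact (Finset.mem_erase.mp this).1
    have hk0 : k ≠ 0 := by
      intro h0
      have : (y.e.erase 1) k ≠ 0 := Finsupp.mem_support_iff.mp hk
      rw [h0, Finsupp.erase_ne (by omega), y.he] at this
      exact this rfl
    exact Dvd.dvd.mul_left (pow_dvd_pow p (by omega)) _
  obtain ⟨c1, hc1⟩ := h1
  obtain ⟨c2, hc2⟩ := h2
  have hsum : y.e.sum (fun k a => a * p ^ k)
      = (y.e.erase 1).sum (fun k a => a * p ^ k) + y.e 1 * p := by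
    conv_lhs => rw [← Finsupp.erase_add_single 1 y.e]
    rw [sum_mul_g (fun k => p ^ k), Finsupp.sum_single_index (by simp), pow_one]
  refine ⟨c2 + c1, ?_⟩
  simp only [Mono.wt, hsum, hc1, hc2]
  ring

/-- If `wt y = p * (p * j + k)` with `k < p`, then `k ≤ y.e 1`. -/
theorem le_e_one {n : ℕ} (p : ℕ) (hp : p.Prime) (hn : 1 ≤ n) (j k : ℕ) (hk : k ≤ p - 1)
    (y : Mono n) (hw : y.wt p = p * (p * j + k)) : k ≤ y.e 1 := by
  obtain ⟨c, hc⟩ := wt_decomp p hn y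
  have hp1 : 1 ≤ p := hp.one_lt.le
  have hkp : k < p := by omega
  have key : y.e 1 + p * c = p * j + k := by
    have h : y.e 1 * p + p ^ 2 * c = p * (p * j + k) := by rw [← hc, hw]
    have h' : p * (y.e 1 + p * c) = p * (p * j + k) := by ring_nf; ring_nf at h; linarith
    exact Nat.eq_of_mul_eq_mul_left hp.pos h'
  have hmod : y.e 1 % p = k % p := by
    have : (y.e 1 + p * c) % p = (k + p * j) % p := by rw [key]; ring_nf
    simpa [Nat.add_mul_mod_self_left] using this
  by_contra hlt
  push_neg at hlt
  rw [Nat.mod_eq_of_lt (lt_trans hlt hkp), Nat.mod_eq_of_lt hkp] at hmod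
  omega

theorem Qop_mulZ1_comm (p n : ℕ) (r a : ℕ) (v : B p n) :
    Qop p n r (mulZ1 p n a v) = mulZ1 p n a (Qop p n r v) := by
  induction v using Finsupp.induction_linear with
  | zero => simp
  | add f g hf hg => simp [map_add, hf, hg]
  | single x c =>
    rw [mulZ1_single, qop_single, qop_single, map_smul]
    congr 1
    have ht : (shiftZ1 a x).t = x.t := rfl
    simp only [Qmono, ht, map_sum, map_smul, mulZ1_single]
    exact Finset.sum_congr rfl fun m _ => by rw [Qtarget_shiftZ1]

/-- For `i ≥ 1`, `j ≥ 0` and `0 ≤ k ≤ p − 1`, multiplication by `ζ₁^k`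
is an `F_p`-linear bijection `M_i(pj) → M_i(pj + k)` commuting with `Q₀, …, Q_i` and
raising internal degree by exactly `qk` (`q = 2(p−1)`): `Σ^{qk} M_i(pj) ≅ M_i(pj + k)`
as graded `E(i)`-modules. -/
theorem mul_zeta1_pow_iso (p : ℕ) (hp : p.Prime) (hodd : Odd p)
    (i : ℕ) (hi : 1 ≤ i) (j k : ℕ) (hk : k ≤ p - 1) :
    Submodule.map (mulZ1 p i k) (Msub p i (p * j)) = Msub p i (p * j + k) ∧
    (∀ v ∈ Msub p i (p * j), mulZ1 p i k v = 0 → v = 0) ∧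
    (∀ r ≤ i, ∀ v : B p i, Qop p i r (mulZ1 p i k v) = mulZ1 p i k (Qop p i r v)) ∧
    (∀ x : Mono i, (shiftZ1 k x).deg p = x.deg p + 2 * (p - 1) * k) := by
  refine ⟨?_, fun v _ hv => mulZ1_injective p i k (by simpa using hv),
    fun r _ v => Qop_mulZ1_comm p i r k v, ?_⟩
  · -- the span statement
    rw [Msub, Msub, monSpan, monSpan, Submodule.map_span, ← Set.image_comp]
    congr 1
    ext f
    constructor
    · rintro ⟨x, hx, rfl⟩
      refine ⟨shiftZ1 k x, ?_, by simp [Function.comp, mulZ1_single]⟩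
      simp only [Set.mem_setOf_eq] at hx ⊢
      rw [wt_shiftZ1, hx]; ring
    · rintro ⟨y, hy, rfl⟩
      simp only [Set.mem_setOf_eq] at hy
      have hke : k ≤ y.e 1 := le_e_one p hp hi j k hk y hy
      refine ⟨⟨y.e - Finsupp.single 1 k, y.t, ?_, y.ht⟩, ?_, ?_⟩
      · simp [Finsupp.tsub_apply, y.he]
      · have hsh : shiftZ1 k (⟨y.e - Finsupp.single 1 k, y.t, by
            simp [Finsupp.tsub_apply, y.he], y.ht⟩ : Mono i) = y := by
          refine Mono.ext' ?_ rfl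
          simp only [shiftZ1]
          exact tsub_add_cancel_of_le (Finsupp.single_le_iff.mpr hke)
        have hw := wt_shiftZ1 p k (⟨y.e - Finsupp.single 1 k, y.t, by
            simp [Finsupp.tsub_apply, y.he], y.ht⟩ : Mono i)
        rw [hsh, hy] at hw
        simp only [Set.mem_setOf_eq]
        have h1 : p * (p * j + k) = p * (p * j) + k * p := by ring
        omega
      · simp only [Function.comp, mulZ1_single]
        congr 1
        refine Mono.ext' ?_ rfl
        simp only [shiftZ1]
        exact tsub_add_cancel_of_le (Finsupp.single_le_iff.mpr hke)
  · -- degree statement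
    intro x
    simp only [Mono.deg, shiftZ1]
    rw [sum_mul_g (fun k => 2 * (p ^ k - 1)), Finsupp.sum_single_index (by simp), pow_one]
    ring
end

section
/- Fix j ≥ 1 and take i = p − 1. Then ψ : ℓ_{pj+p−1} → B₁/F^{pj}B₁ is surjective, yielding a short exact sequence of E(2)-modules 0 → ⊕_{k=0}^{p−1} M_2(pj + k) → ℓ_{pj+p−1} → B₁/F^{pj}B₁ → 0, where the first map is the inclusion of the span of the τ̄_2-free monomials of weight w with p²j ≤ w ≤ p²j + p(p−1). -/
/-- The weight of the `τ̄₂`-free part of a monomial of `B₁`: writing a monomial uniquely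
as `m τ̄₂^ε` with `m` not involving `τ̄₂`, this is `wt m`. -/
def Mono.wtF (p : ℕ) {n : ℕ} (x : Mono n) : ℕ :=
  x.e.sum (fun k a => a * p ^ k) + ∑ m ∈ x.t.erase 2, p ^ m

/-- The filtration `F^a B₁`: the span of the monomials `m τ̄₂^ε` with `wt m ≥ pa`. -/
noncomputable def FSub (p a : ℕ) : Submodule (ZMod p) (B p 1) := monSpan p 1 (fun x => p * a ≤ x.wtF p)

/-- The Brown–Gitler comodule `ℓ_c ⊆ B₁`: the span of the monomials of weight `≤ pc`. -/
noncomputable def lSub (p c : ℕ) : Submodule (ZMod p) (B p 1) := monSpan p 1 (fun x => x.wt p ≤ p * c)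

/-- `M₂(a)` viewed inside `B₁`: the span of the `τ̄₂`-free monomials of weight
exactly `pa`. -/
noncomputable def M2sub (p a : ℕ) : Submodule (ZMod p) (B p 1) :=
  monSpan p 1 (fun x => 2 ∉ x.t ∧ x.wt p = p * a)

/-- The composite `ψ : ℓ_{pj+i} ⊆ B₁ ↠ B₁/F^{pj}B₁` of the inclusion and the
projection. -/
noncomputable def psiMap (p j i : ℕ) :
    lSub p (p * j + i) →ₗ[ZMod p] (B p 1 ⧸ FSub p (p * j)) :=
  (FSub p (p * j)).mkQ ∘ₗ (lSub p (p * j + i)).subtype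

/-!
Write a monomial of `B₁` as `m τ̄₂^ε`, so that its weight is `wt m + ε p²`, and `p ∣ wt m`.
Each `Q_r` trades a factor `τ̄_m` for `ζ_{m-r}^{p^r}` or for `1`, so it never raises the weight,
and for `r ≤ 2` it never lowers `wt m`; hence `ℓ_c` and `F^a B₁` are `E(2)`-submodules.
A monomial outside `F^{pj}B₁` has `wt m ≤ p²j − p`, hence weight `≤ p²j + p(p − 1)`, so it lies
in `ℓ_{pj+p−1}`: this is surjectivity of `ψ`. Conversely a monomial of `ℓ_{pj+p−1}` lying in
`F^{pj}B₁` has `p²j ≤ wt m ≤ wt ≤ p²j + p(p − 1) < p²j + p²`, which forces `ε = 0`.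
-/

section MonomialSpans

variable {p n : ℕ}

theorem monSpan_eq_supported (P : Mono n → Prop) :
    monSpan p n P = Finsupp.supported (ZMod p) (ZMod p) {x | P x} :=
  (Finsupp.supported_eq_span_single _ _).symm

theorem mem_monSpan_iff {P : Mono n → Prop} {f : B p n} :
    f ∈ monSpan p n P ↔ ∀ x ∈ f.support, P x := by
  rw [monSpan_eq_supported, Finsupp.mem_supported]
  rfl

theorem mem_monSpan_congr {P Q R : Mono n → Prop} (hPQ : ∀ x, R x → (P x ↔ Q x)) {f : B p n}
    (hf : f ∈ monSpan p n R) : f ∈ monSpan p n P ↔ f ∈ monSpan p n Q := by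
  rw [mem_monSpan_iff] at hf
  simp only [mem_monSpan_iff]
  exact forall₂_congr fun x hx => hPQ x (hf x hx)

theorem monSpan_sup_eq_top {P Q : Mono n → Prop} (h : ∀ x, P x ∨ Q x) :
    monSpan p n P ⊔ monSpan p n Q = ⊤ := by
  rw [monSpan_eq_supported, monSpan_eq_supported, ← Finsupp.supported_union,
    ← Finsupp.supported_univ]
  exact congrArg _ (Set.eq_univ_of_forall h)

theorem Qop_mem_monSpan {r : ℕ} {P Q : Mono n → Prop}
    (hPQ : ∀ x, P x → ∀ m ∈ x.t, Q (Qtarget p r x m)) {f : B p n} (hf : f ∈ monSpan p n P) :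
    Qop p n r f ∈ monSpan p n Q := by
  rw [mem_monSpan_iff] at hf
  rw [Qop, Finsupp.lsum_apply, Finsupp.sum]
  refine Submodule.sum_mem _ fun x hx => Submodule.smul_mem _ _ ?_
  exact Submodule.sum_mem _ fun m hm =>
    Submodule.smul_mem _ _ (Submodule.subset_span ⟨_, hPQ x (hf x hx) m hm, rfl⟩)

end MonomialSpans

namespace Mono

variable {p n : ℕ}

theorem wt_eq_wtF_add (x : Mono n) :
    x.wt p = x.wtF p + if 2 ∈ x.t then p ^ 2 else 0 := by
  unfold wt wtF
  split_ifs with h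
  · rw [← Finset.sum_erase_add x.t _ h, add_assoc]
  · rw [Finset.erase_eq_of_notMem h, add_zero]

theorem dvd_wtF (x : Mono n) : p ∣ x.wtF p := by
  refine dvd_add (Finset.dvd_sum fun k hk => ?_) (Finset.dvd_sum fun m hm => ?_)
  · have hk0 : k ≠ 0 := fun h => Finsupp.mem_support_iff.mp hk (h ▸ x.he)
    exact (dvd_pow_self p hk0).mul_left _
  · exact dvd_pow_self p (by have := x.ht m (Finset.mem_of_mem_erase hm); omega)

theorem sum_add_single_mul_pow (e : ℕ →₀ ℕ) (k a : ℕ) :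
    (e + Finsupp.single k a).sum (fun i b => b * p ^ i) =
      e.sum (fun i b => b * p ^ i) + a * p ^ k := by
  rw [Finsupp.sum_add_index' (fun _ => zero_mul _) (fun _ _ _ => add_mul _ _ _),
    Finsupp.sum_single_index (zero_mul _)]

theorem wt_Qtarget_le {r m : ℕ} {x : Mono n} (hm : m ∈ x.t) :
    (Qtarget p r x m).wt p ≤ x.wt p := by
  have hsum := Finset.sum_erase_add x.t (fun i => p ^ i) hm
  unfold wt Qtarget
  simp only
  split_ifs with h
  · rw [sum_add_single_mul_pow, _root_.pow_mul_pow_sub p h.le]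
    omega
  · omega

theorem wtF_le_wtF_Qtarget {r m : ℕ} (hr : r ≤ 2) {x : Mono 1} (hm : m ∈ x.t) :
    x.wtF p ≤ (Qtarget p r x m).wtF p := by
  unfold wtF Qtarget
  simp only
  by_cases h2 : m = 2
  · subst h2
    rw [Finset.erase_idem]
    split_ifs
    · rw [sum_add_single_mul_pow]
      omega
    · rfl
  · have hrm : r < m := by have := x.ht m hm; omega
    have hsum := Finset.sum_erase_add (x.t.erase 2) (fun i => p ^ i)
      (Finset.mem_erase.mpr ⟨h2, hm⟩)
    rw [if_pos hrm, sum_add_single_mul_pow, _root_.pow_mul_pow_sub p hrm.le,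
      Finset.erase_right_comm]
    omega

theorem wt_le_wtF_add (x : Mono n) : x.wt p ≤ x.wtF p + p ^ 2 := by
  rw [wt_eq_wtF_add]
  split_ifs <;> omega

theorem wt_le_or_le_wtF (x : Mono n) (j : ℕ) :
    x.wt p ≤ p * (p * j + (p - 1)) ∨ p * (p * j) ≤ x.wtF p := by
  refine or_iff_not_imp_right.mpr fun hlt => ?_
  rw [not_le] at hlt
  have hp : 1 ≤ p := Nat.pos_of_mul_pos_right (Nat.zero_lt_of_lt hlt)
  obtain ⟨a, ha⟩ := x.dvd_wtF (p := p)
  have ha1 : a + 1 ≤ p * j := Nat.lt_of_mul_lt_mul_left (ha ▸ hlt)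
  calc x.wt p ≤ x.wtF p + p ^ 2 := x.wt_le_wtF_add
    _ = p * (a + 1) + p * (p - 1) := by rw [ha]; zify [hp]; ring
    _ ≤ p * (p * j) + p * (p - 1) := by gcongr
    _ = p * (p * j + (p - 1)) := (mul_add _ _ _).symm

theorem le_wtF_iff_of_wt_le (hp : 0 < p) {x : Mono n} {j : ℕ}
    (hx : x.wt p ≤ p * (p * j + (p - 1))) :
    p * (p * j) ≤ x.wtF p ↔ 2 ∉ x.t ∧ p ^ 2 * j ≤ x.wt p ∧ x.wt p ≤ p ^ 2 * j + p * (p - 1) := by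
  have hsq : p ^ 2 * j = p * (p * j) := by ring
  have hlt : p * (p - 1) < p ^ 2 := by
    rw [sq]
    exact Nat.mul_lt_mul_of_pos_left (Nat.sub_lt hp one_pos) hp
  rw [mul_add, wt_eq_wtF_add] at hx
  rw [hsq, wt_eq_wtF_add]
  split_ifs at hx ⊢ with h2
  · simp only [h2, not_true_eq_false, false_and, iff_false, not_le]
    omega
  · simp only [h2, not_false_eq_true, true_and, add_zero] at hx ⊢
    omega

end Mono

theorem Qop_mem_lSub {p c r : ℕ} {f : B p 1} (hf : f ∈ lSub p c) : Qop p 1 r f ∈ lSub p c :=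
  Qop_mem_monSpan (fun _ hx _ hm => (Mono.wt_Qtarget_le hm).trans hx) hf

theorem Qop_mem_FSub {p a r : ℕ} (hr : r ≤ 2) {f : B p 1} (hf : f ∈ FSub p a) :
    Qop p 1 r f ∈ FSub p a :=
  Qop_mem_monSpan (fun _ hx _ hm => hx.trans (Mono.wtF_le_wtF_Qtarget hr hm)) hf

theorem psiMap_surjective_iff (p j i : ℕ) :
    Function.Surjective (psiMap p j i) ↔ lSub p (p * j + i) ⊔ FSub p (p * j) = ⊤ := by
  rw [← LinearMap.range_eq_top, psiMap, LinearMap.range_comp, Submodule.range_subtype,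
    Submodule.map_mkQ_eq_top, sup_comm]

theorem ker_psiMap (p j i : ℕ) :
    LinearMap.ker (psiMap p j i) = (FSub p (p * j)).comap (lSub p (p * j + i)).subtype := by
  rw [psiMap, LinearMap.ker_comp, Submodule.ker_mkQ]

theorem psi_short_exact_sequence_general (p : ℕ) (hp : p.Prime) (j : ℕ) :
    (∀ r ≤ 2, ∀ x ∈ lSub p (p * j + (p - 1)), Qop p 1 r x ∈ lSub p (p * j + (p - 1))) ∧
    (∀ r ≤ 2, ∀ x ∈ FSub p (p * j), Qop p 1 r x ∈ FSub p (p * j)) ∧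
    Function.Surjective (psiMap p j (p - 1)) ∧
    LinearMap.ker (psiMap p j (p - 1)) =
      Submodule.comap (lSub p (p * j + (p - 1))).subtype
        (monSpan p 1 (fun x =>
          2 ∉ x.t ∧ p ^ 2 * j ≤ x.wt p ∧ x.wt p ≤ p ^ 2 * j + p * (p - 1))) := by
  refine ⟨fun _ _ _ => Qop_mem_lSub, fun _ hr _ => Qop_mem_FSub hr, ?_, ?_⟩
  · rw [psiMap_surjective_iff]
    exact monSpan_sup_eq_top fun x => x.wt_le_or_le_wtF j
  · ext ⟨f, hf⟩
    rw [ker_psiMap, Submodule.mem_comap, Submodule.mem_comap]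
    exact mem_monSpan_congr (fun x hx => Mono.le_wtF_iff_of_wt_le hp.pos hx) hf

/-- For `j ≥ 1` and `i = p − 1`, the map `ψ : ℓ_{pj+p−1} → B₁/F^{pj}B₁`
is a surjection of `E(2)`-modules (`ℓ_{pj+p−1}` and `F^{pj}B₁` are stable under
`Q₀, Q₁, Q₂`), yielding a short exact sequence of `E(2)`-modules
`0 → ⊕_{k=0}^{p−1} M₂(pj + k) → ℓ_{pj+p−1} → B₁/F^{pj}B₁ → 0`,
the first map being the inclusion of the span of the `τ̄₂`-free monomials of weight `w`
with `p²j ≤ w ≤ p²j + p(p−1)`. -/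
theorem psi_short_exact_sequence (p : ℕ) (hp : p.Prime) (hodd : Odd p)
    (j : ℕ) (hj : 1 ≤ j) :
    (∀ r ≤ 2, ∀ x ∈ lSub p (p * j + (p - 1)), Qop p 1 r x ∈ lSub p (p * j + (p - 1))) ∧
    (∀ r ≤ 2, ∀ x ∈ FSub p (p * j), Qop p 1 r x ∈ FSub p (p * j)) ∧
    Function.Surjective (psiMap p j (p - 1)) ∧
    LinearMap.ker (psiMap p j (p - 1)) =
      Submodule.comap (lSub p (p * j + (p - 1))).subtype
        (monSpan p 1 (fun x =>
          2 ∉ x.t ∧ p ^ 2 * j ≤ x.wt p ∧ x.wt p ≤ p ^ 2 * j + p * (p - 1))) :=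
  psi_short_exact_sequence_general p hp j
end
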